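/- Let Π be a complex matrix indexed by Fin m × Fin n such that: Π is an orthogonal projection (Π = Πᴴ and Π² = Π) with Π ≠ I; the partial transpose Π^Γ is positive semidefinite and I − Π^Γ is positive semidefinite; and there exist no nonzero x ∈ ℂ^m, y ∈ ℂ^n with (x⊗y)ᴴ Π (x⊗y) = 0. Let δ = min over ‖x‖ = ‖y‖ = 1 of (x⊗y)ᴴ Π (x⊗y). Then δ > 0, and for every ε with 0 < ε < δ: (a) (x⊗y)ᴴ (Π − ε·I) (x⊗y) ≥ 0 for all x ∈ ℂ^m, y ∈ ℂ^n; and (b) there do not exist positive semidefinite matrices Q and R with Π − ε·I = Q + R^Γ (i.e., the form associated to Π − ε·I is indecomposable). -/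

import Mathlib

/-!
A projection `P` is positive semidefinite, so `δ ≥ 0`, and `δ ≠ 0` because `p_P` has no nontrivial
product zeros; by homogeneity `p_P(x, y) ≥ δ ‖x‖² ‖y‖²`, which gives (a). For (b), pair a
decomposition `P - ε • 1 = Q + R^Γ` with the complementary projection `1 - P` through the trace:
the left side gives `-ε tr (1 - P) < 0`, whereas `tr (Q (1 - P)) ≥ 0` and
`tr (R^Γ (1 - P)) = tr (R (1 - P^Γ)) ≥ 0`.
-/

open Matrix
open scoped ComplexOrder

/-- Kronecker product vector: `(x ⊗ y)_{(i,k)} = x i * y k`. -/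
noncomputable def kron {m n : ℕ} (x : Fin m → ℂ) (y : Fin n → ℂ) : Fin m × Fin n → ℂ :=
  fun ik => x ik.1 * y ik.2

/-- The biquadratic form `p_W(x,y) = (x⊗y)ᴴ W (x⊗y)`. -/
noncomputable def bqf {m n : ℕ} (W : Matrix (Fin m × Fin n) (Fin m × Fin n) ℂ)
    (x : Fin m → ℂ) (y : Fin n → ℂ) : ℂ :=
  star (kron x y) ⬝ᵥ (W *ᵥ kron x y)

/-- Partial transpose (on the second factor): `(W^Γ)_{(i,k),(j,l)} = W_{(i,l),(j,k)}`. -/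
noncomputable def pt {m n : ℕ} (W : Matrix (Fin m × Fin n) (Fin m × Fin n) ℂ) :
    Matrix (Fin m × Fin n) (Fin m × Fin n) ℂ :=
  Matrix.of fun p q => W (p.1, q.2) (q.1, p.2)

namespace Matrix

open scoped MatrixOrder

variable {k 𝕜 : Type*} [Fintype k] [RCLike 𝕜]

lemma PosSemidef.trace_mul_nonneg [DecidableEq k] {A B : Matrix k k 𝕜} (hA : A.PosSemidef)
    (hB : B.PosSemidef) : 0 ≤ (A * B).trace := by
  obtain ⟨Y, rfl⟩ := CStarAlgebra.nonneg_iff_eq_star_mul_self.mp hB.nonneg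
  rw [← Matrix.mul_assoc, trace_mul_cycle]
  exact (hA.mul_mul_conjTranspose_same Y).trace_nonneg

lemma PosSemidef.trace_pos_of_ne_zero {A : Matrix k k 𝕜} (hA : A.PosSemidef) (h : A ≠ 0) :
    0 < A.trace :=
  hA.trace_nonneg.lt_of_ne' (hA.trace_eq_zero_iff.not.mpr h)

lemma posSemidef_of_isStarProjection {P : Matrix k k 𝕜} (hP : IsStarProjection P) :
    P.PosSemidef :=
  hP.nonneg.posSemidef

end Matrix

section PartialTranspose

variable {m n : ℕ}

lemma pt_one : pt (1 : Matrix (Fin m × Fin n) (Fin m × Fin n) ℂ) = 1 := by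
  ext ⟨i, k⟩ ⟨j, l⟩
  simp only [pt, of_apply, one_apply, Prod.mk.injEq]
  grind

lemma pt_sub (A B : Matrix (Fin m × Fin n) (Fin m × Fin n) ℂ) : pt (A - B) = pt A - pt B := rfl

lemma trace_pt_mul (A B : Matrix (Fin m × Fin n) (Fin m × Fin n) ℂ) :
    (pt A * B).trace = (A * pt B).trace := by
  simp only [trace, diag, mul_apply, ← Finset.sum_product', Finset.univ_product_univ]
  let swap : (Fin m × Fin n) × (Fin m × Fin n) ≃ (Fin m × Fin n) × (Fin m × Fin n) :=
    ⟨fun z => ((z.1.1, z.2.2), (z.2.1, z.1.2)), fun z => ((z.1.1, z.2.2), (z.2.1, z.1.2)),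
      fun _ => rfl, fun _ => rfl⟩
  exact Fintype.sum_equiv swap _ _ fun _ => rfl

end PartialTranspose

section Normalization

variable {ι : Type*} [Fintype ι]

lemma ne_zero_of_sum_normSq_eq_one {x : ι → ℂ} (hx : ∑ i, Complex.normSq (x i) = 1) : x ≠ 0 := by
  rintro rfl
  simp at hx

lemma exists_eq_ofReal_smul_of_ne_zero {x : ι → ℂ} (hx : x ≠ 0) :
    ∃ (a : ℝ) (u : ι → ℂ), ∑ i, Complex.normSq (u i) = 1 ∧ x = (a : ℂ) • u := by
  set s := ∑ i, Complex.normSq (x i)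
  have hs : 0 < s := by
    obtain ⟨i, hi⟩ := Function.ne_iff.mp hx
    exact Finset.sum_pos' (fun j _ => Complex.normSq_nonneg _)
      ⟨i, Finset.mem_univ _, Complex.normSq_pos.mpr hi⟩
  have ha : Real.sqrt s ≠ 0 := (Real.sqrt_pos.mpr hs).ne'
  refine ⟨Real.sqrt s, ((Real.sqrt s)⁻¹ : ℝ) • x, ?_, ?_⟩
  · simp only [Pi.smul_apply, Complex.real_smul, Complex.normSq_mul, Complex.normSq_ofReal,
      ← Finset.mul_sum]
    rw [← mul_inv, Real.mul_self_sqrt hs.le, inv_mul_cancel₀ hs.ne']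
  · rw [← Complex.coe_smul, smul_smul, ← Complex.ofReal_mul, mul_inv_cancel₀ ha,
      Complex.ofReal_one, one_smul]

end Normalization

section Biquadratic

variable {m n : ℕ}

lemma bqf_one (x : Fin m → ℂ) (y : Fin n → ℂ) :
    bqf 1 x y = ((∑ i, Complex.normSq (x i)) * (∑ k, Complex.normSq (y k)) : ℝ) := by
  simp only [bqf, one_mulVec, dotProduct, Pi.star_apply, kron, Fintype.sum_prod_type]
  push_cast
  rw [Finset.sum_mul_sum]
  refine Finset.sum_congr rfl fun i _ => Finset.sum_congr rfl fun k _ => ?_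
  simp only [star_mul', Complex.normSq_eq_conj_mul_self, Complex.star_def]
  ring

lemma bqf_zero_left (W : Matrix (Fin m × Fin n) (Fin m × Fin n) ℂ) (y : Fin n → ℂ) :
    bqf W 0 y = 0 := by
  simp [bqf, kron, dotProduct]

lemma bqf_zero_right (W : Matrix (Fin m × Fin n) (Fin m × Fin n) ℂ) (x : Fin m → ℂ) :
    bqf W x 0 = 0 := by
  simp [bqf, kron, dotProduct]

lemma bqf_ofReal_smul (W : Matrix (Fin m × Fin n) (Fin m × Fin n) ℂ) (a b : ℝ)
    (x : Fin m → ℂ) (y : Fin n → ℂ) :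
    bqf W ((a : ℂ) • x) ((b : ℂ) • y) = ((a * b) ^ 2 : ℝ) * bqf W x y := by
  have hk : kron ((a : ℂ) • x) ((b : ℂ) • y) = ((a * b : ℝ) : ℂ) • kron x y := by
    funext p
    simp only [kron, Pi.smul_apply, smul_eq_mul]
    push_cast
    ring
  simp only [bqf, hk, star_smul, smul_dotProduct, mulVec_smul, dotProduct_smul, smul_eq_mul,
    Complex.star_def, Complex.conj_ofReal]
  push_cast
  ring

lemma bqf_sub_smul_one (W : Matrix (Fin m × Fin n) (Fin m × Fin n) ℂ) (c : ℂ)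
    (x : Fin m → ℂ) (y : Fin n → ℂ) :
    bqf (W - c • 1) x y = bqf W x y - c * bqf 1 x y := by
  simp only [bqf, sub_mulVec, smul_mulVec, dotProduct_sub, dotProduct_smul, smul_eq_mul]

lemma bqf_nonneg {W : Matrix (Fin m × Fin n) (Fin m × Fin n) ℂ} (hW : W.PosSemidef)
    (x : Fin m → ℂ) (y : Fin n → ℂ) : 0 ≤ bqf W x y :=
  hW.dotProduct_mulVec_nonneg _

variable {W : Matrix (Fin m × Fin n) (Fin m × Fin n) ℂ} {δ : ℝ}

lemma le_bqf_of_isLeast (hW : W.PosSemidef)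
    (hδ : IsLeast {r : ℝ | ∃ (x : Fin m → ℂ) (y : Fin n → ℂ),
      (∑ i, Complex.normSq (x i)) = 1 ∧ (∑ k, Complex.normSq (y k)) = 1 ∧
        bqf W x y = (r : ℂ)} δ)
    (x : Fin m → ℂ) (y : Fin n → ℂ) : (δ : ℂ) * bqf 1 x y ≤ bqf W x y := by
  rcases eq_or_ne x 0 with rfl | hx
  · simp [bqf_zero_left]
  rcases eq_or_ne y 0 with rfl | hy
  · simp [bqf_zero_right]
  obtain ⟨a, u, hu, rfl⟩ := exists_eq_ofReal_smul_of_ne_zero hx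
  obtain ⟨b, v, hv, rfl⟩ := exists_eq_ofReal_smul_of_ne_zero hy
  have hreal := Complex.eq_re_of_ofReal_le (Complex.ofReal_zero ▸ bqf_nonneg hW u v)
  have hδle : δ ≤ (bqf W u v).re := hδ.2 ⟨u, v, hu, hv, hreal⟩
  rw [bqf_ofReal_smul, bqf_ofReal_smul, bqf_one, hu, hv, hreal, mul_one, ← Complex.ofReal_mul,
    ← Complex.ofReal_mul, ← Complex.ofReal_mul, Complex.real_le_real]
  nlinarith [sq_nonneg (a * b)]

lemma pos_of_isLeast (hW : W.PosSemidef)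
    (hnz : ¬ ∃ (x : Fin m → ℂ) (y : Fin n → ℂ), x ≠ 0 ∧ y ≠ 0 ∧ bqf W x y = 0)
    (hδ : IsLeast {r : ℝ | ∃ (x : Fin m → ℂ) (y : Fin n → ℂ),
      (∑ i, Complex.normSq (x i)) = 1 ∧ (∑ k, Complex.normSq (y k)) = 1 ∧
        bqf W x y = (r : ℂ)} δ) :
    0 < δ := by
  obtain ⟨x, y, hx, hy, hxy⟩ := hδ.1
  refine lt_of_le_of_ne (Complex.zero_le_real.mp (hxy ▸ bqf_nonneg hW x y)) ?_
  rintro rfl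
  exact hnz ⟨x, y, ne_zero_of_sum_normSq_eq_one hx, ne_zero_of_sum_normSq_eq_one hy,
    by simpa using hxy⟩

end Biquadratic

theorem not_exists_sub_smul_one_eq_add_pt {m n : ℕ}
    {P : Matrix (Fin m × Fin n) (Fin m × Fin n) ℂ} (hP : IsStarProjection P) (hne : P ≠ 1)
    (hIPT : ((1 : Matrix (Fin m × Fin n) (Fin m × Fin n) ℂ) - pt P).PosSemidef)
    {ε : ℝ} (hε : 0 < ε) :
    ¬ ∃ Q R : Matrix (Fin m × Fin n) (Fin m × Fin n) ℂ,
      Q.PosSemidef ∧ R.PosSemidef ∧ P - (ε : ℂ) • 1 = Q + pt R := by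
  rintro ⟨Q, R, hQ, hR, hdec⟩
  have hM : (1 - P).PosSemidef := posSemidef_of_isStarProjection hP.one_sub
  have htrace : 0 < (1 - P).trace := hM.trace_pos_of_ne_zero (sub_ne_zero.mpr hne.symm)
  have hkill : (P - (ε : ℂ) • 1) * (1 - P) = -((ε : ℂ) • (1 - P)) := by
    rw [Matrix.sub_mul, hP.mul_one_sub_self, smul_mul, Matrix.one_mul, zero_sub]
  have hpair : 0 ≤ ((P - (ε : ℂ) • 1) * (1 - P)).trace := by
    rw [hdec, Matrix.add_mul, trace_add]
    refine add_nonneg (hQ.trace_mul_nonneg hM) ?_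
    rw [trace_pt_mul, pt_sub, pt_one]
    exact hR.trace_mul_nonneg hIPT
  rw [hkill, trace_neg, trace_smul, smul_eq_mul] at hpair
  exact (neg_neg_of_pos (mul_pos (Complex.zero_lt_real.mpr hε) htrace)).not_ge hpair

theorem stmt_7_general (m n : ℕ) (P : Matrix (Fin m × Fin n) (Fin m × Fin n) ℂ)
    (hherm : P.IsHermitian) (hidem : P * P = P) (hne : P ≠ 1)
    (hIPT : ((1 : Matrix (Fin m × Fin n) (Fin m × Fin n) ℂ) - pt P).PosSemidef)
    (hnz : ¬ ∃ (x : Fin m → ℂ) (y : Fin n → ℂ), x ≠ 0 ∧ y ≠ 0 ∧ bqf P x y = 0)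
    (δ : ℝ)
    (hδ : IsLeast {r : ℝ | ∃ (x : Fin m → ℂ) (y : Fin n → ℂ),
      (∑ i, Complex.normSq (x i)) = 1 ∧ (∑ k, Complex.normSq (y k)) = 1 ∧
        bqf P x y = (r : ℂ)} δ) :
    0 < δ ∧ ∀ ε : ℝ, 0 < ε → ε < δ →
      (∀ (x : Fin m → ℂ) (y : Fin n → ℂ), 0 ≤ bqf (P - (ε : ℂ) • 1) x y) ∧
      ¬ ∃ Q R : Matrix (Fin m × Fin n) (Fin m × Fin n) ℂ,
          Q.PosSemidef ∧ R.PosSemidef ∧ P - (ε : ℂ) • 1 = Q + pt R := by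
  have hP : IsStarProjection P := ⟨hidem, hherm⟩
  have hPsd : P.PosSemidef := posSemidef_of_isStarProjection hP
  refine ⟨pos_of_isLeast hPsd hnz hδ, fun ε hε hεδ => ⟨fun x y => ?_,
    not_exists_sub_smul_one_eq_add_pt hP hne hIPT hε⟩⟩
  calc (0 : ℂ) ≤ ((δ - ε : ℝ) : ℂ) * bqf 1 x y :=
        mul_nonneg (Complex.zero_le_real.mpr (sub_nonneg.mpr hεδ.le))
          (bqf_nonneg PosSemidef.one x y)
    _ ≤ bqf P x y - ε * bqf 1 x y := by
        rw [Complex.ofReal_sub, sub_mul]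
        exact sub_le_sub_right (le_bqf_of_isLeast hPsd hδ x y) _
    _ = bqf (P - (ε : ℂ) • 1) x y := (bqf_sub_smul_one P _ x y).symm

theorem stmt_7 (m n : ℕ) (P : Matrix (Fin m × Fin n) (Fin m × Fin n) ℂ)
    (hherm : P.IsHermitian) (hidem : P * P = P) (hne : P ≠ 1)
    (hPT : (pt P).PosSemidef)
    (hIPT : ((1 : Matrix (Fin m × Fin n) (Fin m × Fin n) ℂ) - pt P).PosSemidef)
    (hnz : ¬ ∃ (x : Fin m → ℂ) (y : Fin n → ℂ), x ≠ 0 ∧ y ≠ 0 ∧ bqf P x y = 0)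
    (δ : ℝ)
    (hδ : IsLeast {r : ℝ | ∃ (x : Fin m → ℂ) (y : Fin n → ℂ),
      (∑ i, Complex.normSq (x i)) = 1 ∧ (∑ k, Complex.normSq (y k)) = 1 ∧
        bqf P x y = (r : ℂ)} δ) :
    0 < δ ∧ ∀ ε : ℝ, 0 < ε → ε < δ →
      (∀ (x : Fin m → ℂ) (y : Fin n → ℂ), 0 ≤ bqf (P - (ε : ℂ) • 1) x y) ∧
      ¬ ∃ Q R : Matrix (Fin m × Fin n) (Fin m × Fin n) ℂ,
          Q.PosSemidef ∧ R.PosSemidef ∧ P - (ε : ℂ) • 1 = Q + pt R :=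
  stmt_7_general m n P hherm hidem hne hIPT hnz δ hδ
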